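/- Two Clifford systems {Pᵢ}, {Qᵢ} ∈ C(2m,n) are geometrically equivalent if and only if the quadratic harmonic morphisms F({Pᵢ}) and F({Qᵢ}) are bi-equivalent. -/

import Mathlib

open Matrix BigOperators

/-- Partial derivative in the `i`-th coordinate direction. -/
noncomputable def pderiv {m : ℕ} (i : Fin m) (f : (Fin m → ℝ) → ℝ) : (Fin m → ℝ) → ℝ :=
  fun x => fderiv ℝ f x (Pi.single i 1)

/-- A map `ℝ^m → ℝ^n` is a harmonic morphism iff each component is harmonic and
the map is horizontally weakly conformal. -/
def IsHarmonicMorphism {m n : ℕ} (φ : (Fin m → ℝ) → (Fin n → ℝ)) : Prop :=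
  (∀ (α : Fin n) (x : Fin m → ℝ), ∑ i : Fin m, pderiv i (pderiv i fun y => φ y α) x = 0) ∧
  ∃ lam : (Fin m → ℝ) → ℝ, ∀ (x : Fin m → ℝ) (α β : Fin n),
      ∑ i : Fin m, pderiv i (fun y => φ y α) x * pderiv i (fun y => φ y β) x
        = lam x ^ 2 * (if α = β then 1 else 0)

/-- `A` is the family of symmetric component matrices of the quadratic map `φ`;
the components are genuine (nonzero) quadratic forms. -/
def Represents {m n : ℕ} (A : Fin n → Matrix (Fin m) (Fin m) ℝ)
    (φ : (Fin m → ℝ) → (Fin n → ℝ)) : Prop :=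
  (∀ α, (A α).IsSymm) ∧ (∀ α, A α ≠ 0) ∧ ∀ x α, φ x α = x ⬝ᵥ (A α).mulVec x

/-- A quadratic harmonic morphism. -/
def IsQuadraticHM {m n : ℕ} (φ : (Fin m → ℝ) → (Fin n → ℝ)) : Prop :=
  (∃ A, Represents A φ) ∧ IsHarmonicMorphism φ

/-- `μ` is an eigenvalue of `A`. -/
def HasEigen {m : ℕ} (A : Matrix (Fin m) (Fin m) ℝ) (μ : ℝ) : Prop :=
  ∃ v : Fin m → ℝ, v ≠ 0 ∧ A.mulVec v = μ • v

/-- `φ` is Q-nonsingular: the common rank of the component matrices equals the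
domain dimension. -/
def QNonsingular {m n : ℕ} (φ : (Fin m → ℝ) → (Fin n → ℝ)) : Prop :=
  ∃ A, Represents A φ ∧ ∀ α, (A α).rank = m

/-- `φ` is umbilical: all positive eigenvalues of the component matrices are equal. -/
def Umbilical {m n : ℕ} (φ : (Fin m → ℝ) → (Fin n → ℝ)) : Prop :=
  ∃ A, Represents A φ ∧ ∀ (α : Fin n) (μ ν : ℝ), 0 < μ → 0 < ν →
    HasEigen (A α) μ → HasEigen (A α) ν → μ = ν

/-- `φ ∈ H₂¹(m,n)`: umbilical quadratic harmonic morphism with positive eigenvalue 1. -/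
def MemH21 {m n : ℕ} (φ : (Fin m → ℝ) → (Fin n → ℝ)) : Prop :=
  IsQuadraticHM φ ∧ ∃ A, Represents A φ ∧
    ∀ α : Fin n, HasEigen (A α) 1 ∧ ∀ μ : ℝ, 0 < μ → HasEigen (A α) μ → μ = 1

/-- `G` is an orthogonal matrix. -/
def IsOrthoMat {m : ℕ} (G : Matrix (Fin m) (Fin m) ℝ) : Prop := Gᵀ * G = 1

/-- Domain-equivalence: `φ = ψ ∘ G` for an orthogonal `G`. -/
def DomainEquiv {m n : ℕ} (φ ψ : (Fin m → ℝ) → (Fin n → ℝ)) : Prop :=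
  ∃ G : Matrix (Fin m) (Fin m) ℝ, IsOrthoMat G ∧ ∀ x, φ x = ψ (G.mulVec x)

/-- Bi-equivalence: `φ = H⁻¹ ∘ ψ ∘ G` for orthogonal `G`, `H`. -/
def BiEquiv {m n : ℕ} (φ ψ : (Fin m → ℝ) → (Fin n → ℝ)) : Prop :=
  ∃ (G : Matrix (Fin m) (Fin m) ℝ) (H : Matrix (Fin n) (Fin n) ℝ),
    IsOrthoMat G ∧ IsOrthoMat H ∧ ∀ x, φ x = H⁻¹.mulVec (ψ (G.mulVec x))

/-- A Clifford system: symmetric endomorphisms with `PᵢPⱼ + PⱼPᵢ = 2δᵢⱼ Id`. -/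
def IsCliffordSystem {N n : ℕ} (P : Fin n → Matrix (Fin N) (Fin N) ℝ) : Prop :=
  (∀ i, (P i).IsSymm) ∧
  ∀ i j, P i * P j + P j * P i =
    if i = j then (2 : ℝ) • (1 : Matrix (Fin N) (Fin N) ℝ) else 0

/-- The map `F` sending a Clifford system to the quadratic map
`X ↦ (⟨P₁X,X⟩,…,⟨PₙX,X⟩)`. -/
def cliffordMap {N n : ℕ} (P : Fin n → Matrix (Fin N) (Fin N) ℝ) :
    (Fin N → ℝ) → Fin n → ℝ := fun X α => X ⬝ᵥ (P α).mulVec X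

/-- Algebraic equivalence of Clifford systems. -/
def CliffordAlgEquiv {N n : ℕ} (P Q : Fin n → Matrix (Fin N) (Fin N) ℝ) : Prop :=
  ∃ A : Matrix (Fin N) (Fin N) ℝ, IsOrthoMat A ∧ ∀ i, Q i = A * P i * Aᵀ

/-- Irreducibility: the space is not a direct sum of two nontrivial invariant subspaces. -/
def CliffordIrreducible {N n : ℕ} (P : Fin n → Matrix (Fin N) (Fin N) ℝ) : Prop :=
  ¬∃ U V : Submodule ℝ (Fin N → ℝ), U ≠ ⊥ ∧ V ≠ ⊥ ∧ IsCompl U V ∧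
    (∀ i, ∀ x ∈ U, (P i).mulVec x ∈ U) ∧ ∀ i, ∀ x ∈ V, (P i).mulVec x ∈ V

/-- An O-system: orthogonal endomorphisms with `τᵢᵗτⱼ + τⱼᵗτᵢ = 2δᵢⱼ Id`. -/
def IsOSystem {m n : ℕ} (τ : Fin n → Matrix (Fin m) (Fin m) ℝ) : Prop :=
  (∀ i, (τ i)ᵀ * τ i = 1) ∧
  ∀ i j, (τ i)ᵀ * τ j + (τ j)ᵀ * τ i =
    if i = j then (2 : ℝ) • (1 : Matrix (Fin m) (Fin m) ℝ) else 0

/-- Algebraic equivalence of O-systems. -/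
def OAlgEquiv {m n : ℕ} (τ ρ : Fin n → Matrix (Fin m) (Fin m) ℝ) : Prop :=
  ∃ θ : Matrix (Fin m) (Fin m) ℝ, IsOrthoMat θ ∧ ∀ i, ρ i = θ * τ i * θᵀ

/-- Block-diagonal direct sum of square matrices. -/
def bdiag {m l : ℕ} (A : Matrix (Fin m) (Fin m) ℝ) (B : Matrix (Fin l) (Fin l) ℝ) :
    Matrix (Fin (m + l)) (Fin (m + l)) ℝ :=
  (Matrix.fromBlocks A 0 0 B).submatrix finSumFinEquiv.symm finSumFinEquiv.symm

/-- The block matrix `[[I,0],[0,-I]]`. -/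
def assocP0 (m : ℕ) : Matrix (Fin (m + m)) (Fin (m + m)) ℝ :=
  (Matrix.fromBlocks 1 0 0 (-1)).submatrix finSumFinEquiv.symm finSumFinEquiv.symm

/-- The block matrix `[[0,τ],[τᵗ,0]]`. -/
def assocPi {m : ℕ} (τ : Matrix (Fin m) (Fin m) ℝ) : Matrix (Fin (m + m)) (Fin (m + m)) ℝ :=
  (Matrix.fromBlocks 0 τ τᵀ 0).submatrix finSumFinEquiv.symm finSumFinEquiv.symm

/-- The Clifford system `(P₀,P₁,…,Pₙ)` associated to an O-system `(τ₁,…,τₙ)`. -/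
def assocClifford {m n : ℕ} (τ : Fin n → Matrix (Fin m) (Fin m) ℝ) :
    Fin (n + 1) → Matrix (Fin (m + m)) (Fin (m + m)) ℝ :=
  Fin.cons (assocP0 m) fun j => assocPi (τ j)

/-- Direct sum of two maps: `(φ ⊕ ψ)(x,y) = φ(x) + ψ(y)`. -/
def dsum {m l n : ℕ} (φ : (Fin m → ℝ) → Fin n → ℝ) (ψ : (Fin l → ℝ) → Fin n → ℝ) :
    (Fin (m + l) → ℝ) → Fin n → ℝ :=
  fun x => φ (fun i => x (Fin.castAdd l i)) + ψ fun j => x (Fin.natAdd m j)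

/-- Transport a map along an equality of domain dimensions. -/
def reMap {a b n : ℕ} (h : a = b) (ψ : (Fin b → ℝ) → Fin n → ℝ) :
    (Fin a → ℝ) → Fin n → ℝ := fun x => ψ fun i => x (finCongr h.symm i)

/-- A separable quadratic harmonic morphism. -/
def Separable {M n : ℕ} (φ : (Fin M → ℝ) → Fin n → ℝ) : Prop :=
  ∃ (m l : ℕ) (h : M = m + l), 0 < m ∧ 0 < l ∧
    ∃ (φ₁ : (Fin m → ℝ) → Fin n → ℝ) (φ₂ : (Fin l → ℝ) → Fin n → ℝ),
      IsQuadraticHM φ₁ ∧ IsQuadraticHM φ₂ ∧ φ = reMap h (dsum φ₁ φ₂)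

/-- The `k`-fold direct sum `ψ₁ ⊕ … ⊕ ψₖ` of maps with the same domain dimension. -/
def bigDSum {k M n : ℕ} (ψ : Fin k → (Fin M → ℝ) → Fin n → ℝ) :
    (Fin (k * M) → ℝ) → Fin n → ℝ :=
  fun x => ∑ j : Fin k, ψ j fun i => x (finProdFinEquiv (j, i))

/-- Domain-minimality: no quadratic harmonic morphism into `ℝ^n` exists from a
smaller-dimensional domain. -/
def DomainMinimal {M n : ℕ} (φ : (Fin M → ℝ) → Fin n → ℝ) : Prop :=
  IsQuadraticHM φ ∧ ∀ M' : ℕ, M' < M → ¬∃ ψ : (Fin M' → ℝ) → Fin n → ℝ, IsQuadraticHM ψ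

/-- `m(n)`: dimensions of irreducible Clifford systems;
`m(1)=1, m(2)=2, m(3)=m(4)=4, m(5)=…=m(8)=8, m(n+8)=16m(n)`. -/
def mfun : ℕ → ℕ
  | 0 => 1
  | 1 => 1
  | 2 => 2
  | 3 => 4
  | 4 => 4
  | 5 => 8
  | 6 => 8
  | 7 => 8
  | 8 => 8
  | n + 9 => 16 * mfun (n + 1)

/-- The Hurwitz–Radon number: for `m = (2r+1)·2^(c+4d)` with `0 ≤ c ≤ 3`,
`σ(m) = 2^c + 8d`. -/
def hrSigma (m : ℕ) : ℕ := 2 ^ (padicValNat 2 m % 4) + 8 * (padicValNat 2 m / 4)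

/-- Geometric equivalence of Clifford systems: after an orthogonal change of the
span, the systems are algebraically equivalent. -/
def CliffordGeomEquiv {N n : ℕ} (P Q : Fin n → Matrix (Fin N) (Fin N) ℝ) : Prop :=
  ∃ a : Matrix (Fin n) (Fin n) ℝ, IsOrthoMat a ∧
    CliffordAlgEquiv (fun i => ∑ j, a i j • P j) Q

/-!
Both maps are determined by their component matrices: a symmetric matrix is recovered from its
quadratic form by polarization. An orthogonal change `G` of the domain conjugates every `Pᵢ` by
`G`, and an orthogonal change `H` of the target replaces the `Pᵢ` by the linear combinations
`∑ⱼ Hᵢⱼ Pⱼ`; these are exactly the two moves that make up geometric equivalence.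
-/

theorem Matrix.IsSymm.toMatrix'_toQuadraticForm' {ι R : Type*} [Fintype ι] [DecidableEq ι]
    [CommRing R] [Invertible (2 : R)] {M : Matrix ι ι R} (hM : M.IsSymm) :
    M.toQuadraticForm'.toMatrix' = M := by
  rw [QuadraticForm.toMatrix', Matrix.toQuadraticForm', QuadraticMap.associated_left_inverse,
    LinearMap.toMatrix'_toLinearMap₂']
  intro x y
  rw [toLinearMap₂'_apply', toLinearMap₂'_apply', dotProduct_mulVec, ← mulVec_transpose, hM.eq,
    dotProduct_comm]

theorem Matrix.IsSymm.eq_of_dotProduct_mulVec_self {ι R : Type*} [Fintype ι] [DecidableEq ι]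
    [CommRing R] [Invertible (2 : R)] {M M' : Matrix ι ι R} (hM : M.IsSymm) (hM' : M'.IsSymm)
    (h : ∀ x, x ⬝ᵥ M *ᵥ x = x ⬝ᵥ M' *ᵥ x) : M = M' := by
  rw [← hM.toMatrix'_toQuadraticForm', ← hM'.toMatrix'_toQuadraticForm']
  congr 1
  ext x
  simpa [Matrix.toQuadraticForm', toLinearMap₂'_apply'] using h x

theorem Matrix.IsSymm.transpose_mul_mul {ι R : Type*} [Fintype ι] [CommSemiring R]
    {M : Matrix ι ι R} (hM : M.IsSymm) (G : Matrix ι ι R) : (Gᵀ * M * G).IsSymm := by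
  rw [IsSymm, transpose_mul, transpose_mul, transpose_transpose, hM.eq, Matrix.mul_assoc]

theorem Matrix.isSymm_sum_smul {ι κ R : Type*} [CommSemiring R] (s : Finset κ) (c : κ → R)
    {M : κ → Matrix ι ι R} (hM : ∀ j, (M j).IsSymm) : (∑ j ∈ s, c j • M j).IsSymm :=
  Finset.sum_induction _ IsSymm (fun _ _ => IsSymm.add) isSymm_zero
    fun j _ => (hM j).smul (c j)

namespace IsOrthoMat

variable {k : ℕ} {A : Matrix (Fin k) (Fin k) ℝ}

theorem mul_transpose (hA : IsOrthoMat A) : A * Aᵀ = 1 :=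
  mul_eq_one_comm.mp hA

theorem inv_eq_transpose (hA : IsOrthoMat A) : A⁻¹ = Aᵀ :=
  inv_eq_left_inv hA

theorem transpose_mul_conj (hA : IsOrthoMat A) (M : Matrix (Fin k) (Fin k) ℝ) :
    Aᵀ * (A * M * Aᵀ) * A = M := by
  rw [← Matrix.mul_assoc, ← Matrix.mul_assoc, hA, Matrix.one_mul, Matrix.mul_assoc, hA,
    Matrix.mul_one]

theorem mul_conj_transpose (hA : IsOrthoMat A) (M : Matrix (Fin k) (Fin k) ℝ) :
    A * (Aᵀ * M * A) * Aᵀ = M := by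
  rw [← Matrix.mul_assoc, ← Matrix.mul_assoc, hA.mul_transpose, Matrix.one_mul, Matrix.mul_assoc,
    hA.mul_transpose, Matrix.mul_one]

end IsOrthoMat

section cliffordMap

variable {N n : ℕ}

theorem cliffordMap_mulVec (P : Fin n → Matrix (Fin N) (Fin N) ℝ) (G : Matrix (Fin N) (Fin N) ℝ)
    (x : Fin N → ℝ) : cliffordMap P (G *ᵥ x) = cliffordMap (fun i => Gᵀ * P i * G) x := by
  funext i
  rw [cliffordMap, cliffordMap, ← mulVec_mulVec, ← mulVec_mulVec, dotProduct_mulVec x Gᵀ,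
    vecMul_transpose]

theorem cliffordMap_sum_smul {k : ℕ} (a : Matrix (Fin k) (Fin n) ℝ)
    (P : Fin n → Matrix (Fin N) (Fin N) ℝ) (x : Fin N → ℝ) :
    cliffordMap (fun i => ∑ j, a i j • P j) x = a *ᵥ cliffordMap P x := by
  funext i
  simp only [cliffordMap, sum_mulVec, smul_mulVec, dotProduct_sum, dotProduct_smul, smul_eq_mul]
  rfl

theorem eq_of_cliffordMap_eq {P P' : Fin n → Matrix (Fin N) (Fin N) ℝ}
    (hP : ∀ i, (P i).IsSymm) (hP' : ∀ i, (P' i).IsSymm) (h : cliffordMap P = cliffordMap P') :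
    P = P' :=
  funext fun i => (hP i).eq_of_dotProduct_mulVec_self (hP' i) fun x => congrFun (congrFun h x) i

end cliffordMap

/-- Two Clifford systems `{Pᵢ}, {Qᵢ} ∈ C(2m,n)` are geometrically
equivalent iff the quadratic harmonic morphisms `F({Pᵢ})` and `F({Qᵢ})` are
bi-equivalent. -/
theorem clifford_geomEquiv_iff_biEquiv {m n : ℕ}
    (P Q : Fin n → Matrix (Fin (m + m)) (Fin (m + m)) ℝ)
    (hP : IsCliffordSystem P) (hQ : IsCliffordSystem Q) :
    CliffordGeomEquiv P Q ↔ BiEquiv (cliffordMap P) (cliffordMap Q) := by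
  constructor
  · rintro ⟨a, ha, A, hA, hQA⟩
    refine ⟨A, a, hA, ha, fun x => ?_⟩
    have hmix : cliffordMap Q (A *ᵥ x) = a *ᵥ cliffordMap P x := by
      rw [cliffordMap_mulVec, ← cliffordMap_sum_smul]
      simp only [hQA, hA.transpose_mul_conj]
    rw [hmix, mulVec_mulVec, ha.inv_eq_transpose, ha, one_mulVec]
  · rintro ⟨G, H, hG, hH, hPQ⟩
    refine ⟨H, hH, G, hG, fun i => ?_⟩
    have hconj : ∀ i, Gᵀ * Q i * G = ∑ j, H i j • P j := by
      refine congrFun <| eq_of_cliffordMap_eq (fun i => (hQ.1 i).transpose_mul_mul G)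
        (fun i => isSymm_sum_smul _ _ hP.1) (funext fun x => ?_)
      rw [← cliffordMap_mulVec, cliffordMap_sum_smul, hPQ, hH.inv_eq_transpose, mulVec_mulVec,
        hH.mul_transpose, one_mulVec]
    beta_reduce
    rw [← hconj i, hG.mul_conj_transpose]
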